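/- Let f, v2222, v223, v226, v233, v236, v333, e3, e6 be nonnegative integers satisfying: f ≥ 5; v2222 + v236 + v333 ≥ 1; 2·e3 = 3·v333 + 2·v233 + v223 + v236; 2·e6 = v226 + v236; and e6 ≥ 1. Define H₂₃₆(t) = (v2222 + v236 + v333 − 1)·t⁹ + (v2222 + 2·v236 + 2·v333 + f − 5)·t⁸ + (2·v2222 + (1/2)·v223 + (1/2)·v226 + v233 + 3·v236 + (5/2)·v333 + f − 7)·t⁷ + (2·v2222 + (1/2)·v226 + v233 + (7/2)·v236 + 3·v333 + 2·f − 11)·t⁶ + (2·v2222 + (1/2)·v223 + v226 + v233 + (7/2)·v236 + (7/2)·v333 + 2·f − 12)·t⁵ + (2·v2222 + (1/2)·v223 + v226 + v233 + (5/2)·v236 + (5/2)·v333 + 2·f − 12)·t⁴ + (v2222 + (1/2)·v226 + v233 + (3/2)·v236 + 2·v333 + 2·f − 11)·t³ + (v2222 + (1/2)·v223 + (1/2)·v226 + v233 + v236 + (3/2)·v333 + f − 7)·t² + (f − 5)·t − 1. Then all coefficients of H₂₃₆ are integers, the coefficients in degrees 1 through 9 are nonnegative, the coefficients of t⁷ and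 t⁸ are strictly positive, and there exists a real number r0 with 0 < r0 < 1 such that H₂₃₆(r0) = 0, every complex root z of H₂₃₆ with z ≠ r0 satisfies |z| > r0, and 1/r0 is a Perron number. -/

import Mathlib

open Polynomial

/-- A *Perron number* is a real algebraic integer `τ > 1` such that every complex root of the
minimal polynomial of `τ` over `ℚ` other than `τ` itself has absolute value strictly less
than `τ`. -/
def IsPerronNumber (τ : ℝ) : Prop :=
  1 < τ ∧ IsIntegral ℤ τ ∧
    ∀ z : ℂ, aeval z (minpoly ℚ τ) = 0 → z ≠ (τ : ℂ) → ‖z‖ < τ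

/-!
Write `H₂₃₆ = q - 1`, where `q` has nonnegative coefficients and `q(0) = 0`. On `[0, ∞)`, `q` is
strictly increasing, so `q = 1` has exactly one solution `r₀`, and it lies in `(0, 1)`. For a complex
root `z` we have `1 = |q(z)| ≤ q(|z|)`, so `|z| ≥ r₀`. Because the coefficients of degree 7 and 8 are
both positive, the triangle inequality is strict unless `z` is a nonnegative real, that is, unless
`z = r₀`. Since `H₂₃₆(0) = -1`, the negated reversed polynomial `-H₂₃₆*` is monic with integer
coefficients, and its roots are the inverses of the roots of `H₂₃₆`. So `1/r₀` is an algebraic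
integer whose other conjugates lie strictly inside the disc of radius `1/r₀`.
-/

theorem Complex.norm_add_mul_lt {a b : ℝ} (ha : 0 < a) (hb : 0 < b) {z : ℂ} (hz : z ≠ ‖z‖) :
    ‖(a + b * z : ℂ)‖ < a + b * ‖z‖ := by
  have hray : ¬SameRay ℝ (a : ℂ) (b * z) := by
    intro h
    obtain ⟨s, hs, hsz⟩ := h.exists_nonneg_left (by exact_mod_cast ha.ne')
    have hz' : z = ((s * a / b : ℝ) : ℂ) := by
      rw [Complex.real_smul] at hsz
      push_cast
      rw [eq_div_iff (by exact_mod_cast hb.ne')]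
      linear_combination -hsz
    apply hz
    rw [hz', Complex.norm_real, Real.norm_of_nonneg (by positivity)]
  calc ‖(a + b * z : ℂ)‖ < ‖(a : ℂ)‖ + ‖(b * z : ℂ)‖ := norm_add_lt_of_not_sameRay hray
    _ = a + b * ‖z‖ := by
      rw [norm_mul, Complex.norm_real, Complex.norm_real, Real.norm_of_nonneg ha.le,
        Real.norm_of_nonneg hb.le]

namespace Polynomial

variable {p : ℝ[X]}

theorem norm_aeval_le_eval_norm (hp : ∀ n, 0 ≤ p.coeff n) (z : ℂ) :
    ‖aeval z p‖ ≤ p.eval ‖z‖ := by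
  rw [aeval_eq_sum_range, eval_eq_sum_range]
  refine (norm_sum_le _ _).trans_eq (Finset.sum_congr rfl fun i _ => ?_)
  rw [norm_smul, norm_pow, Real.norm_of_nonneg (hp i)]

theorem norm_aeval_lt_eval_norm (hp : ∀ n, 0 ≤ p.coeff n) {k : ℕ} (hk : 0 < p.coeff k)
    (hk' : 0 < p.coeff (k + 1)) {z : ℂ} (hz : z ≠ ‖z‖) : ‖aeval z p‖ < p.eval ‖z‖ := by
  set a := p.coeff k
  set b := p.coeff (k + 1)
  set q := p - monomial k a - monomial (k + 1) b with hq
  have hq_nonneg : ∀ n, 0 ≤ q.coeff n := by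
    intro n
    simp only [hq, coeff_sub, coeff_monomial, a, b]
    split_ifs <;> subst_vars <;> first | omega | simp [hp]
  have hp_eq : p = C a * X ^ k + C b * X ^ (k + 1) + q := by
    simp only [hq, C_mul_X_pow_eq_monomial]; ring
  have hz0 : 0 < ‖z‖ := norm_pos_iff.mpr (by rintro rfl; simp at hz)
  have hpair : ‖(a * z ^ k + b * z ^ (k + 1) : ℂ)‖ < a * ‖z‖ ^ k + b * ‖z‖ ^ (k + 1) := by
    calc ‖(a * z ^ k + b * z ^ (k + 1) : ℂ)‖ = ‖z‖ ^ k * ‖(a + b * z : ℂ)‖ := by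
          rw [← norm_pow, ← norm_mul]; ring_nf
      _ < ‖z‖ ^ k * (a + b * ‖z‖) := by
          gcongr; exact Complex.norm_add_mul_lt hk hk' hz
      _ = a * ‖z‖ ^ k + b * ‖z‖ ^ (k + 1) := by ring
  calc ‖aeval z p‖ ≤ ‖(a * z ^ k + b * z ^ (k + 1) : ℂ)‖ + ‖aeval z q‖ := by
        rw [hp_eq]; simpa using norm_add_le _ _
    _ < a * ‖z‖ ^ k + b * ‖z‖ ^ (k + 1) + q.eval ‖z‖ :=
        add_lt_add_of_lt_of_le hpair (norm_aeval_le_eval_norm hq_nonneg z)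
    _ = p.eval ‖z‖ := by rw [hp_eq]; simp

theorem strictMonoOn_eval (hp : ∀ n, 0 ≤ p.coeff n) {k : ℕ} (hk0 : k ≠ 0) (hk : 0 < p.coeff k) :
    StrictMonoOn p.eval (Set.Ici 0) := by
  intro x hx y _ hxy
  show p.eval x < p.eval y
  rw [eval_eq_sum_range, eval_eq_sum_range]
  refine Finset.sum_lt_sum (fun i _ => ?_) ⟨k, ?_, ?_⟩
  · exact mul_le_mul_of_nonneg_left (pow_le_pow_left₀ hx hxy.le i) (hp i)
  · exact Finset.mem_range_succ_iff.mpr (le_natDegree_of_ne_zero hk.ne')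
  · exact mul_lt_mul_of_pos_left (pow_lt_pow_left₀ hxy hx hk0) hk

theorem coeff_add_coeff_le_eval_one (hp : ∀ n, 0 ≤ p.coeff n) {i j : ℕ} (hij : i ≠ j) :
    p.coeff i + p.coeff j ≤ p.eval 1 := by
  rw [eval_eq_sum_range' (n := p.natDegree + i + j + 1) (by omega), ← Finset.sum_pair hij]
  simp only [one_pow, mul_one]
  exact Finset.sum_le_sum_of_subset_of_nonneg (by intro x; simp; omega) fun n _ _ => hp n

theorem exists_eval_eq_lt_norm_of_aeval_eq (hp : ∀ n, 0 ≤ p.coeff n) {k : ℕ}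
    (hk : 0 < p.coeff k) (hk' : 0 < p.coeff (k + 1)) {c : ℝ} (h0 : p.coeff 0 < c)
    (h1 : c < p.eval 1) :
    ∃ r, 0 < r ∧ r < 1 ∧ p.eval r = c ∧ ∀ z : ℂ, aeval z p = c → z ≠ r → r < ‖z‖ := by
  rw [coeff_zero_eq_eval_zero] at h0
  obtain ⟨r, ⟨hr0, hr1⟩, hr : p.eval r = c⟩ :=
    intermediate_value_Ioo zero_le_one p.continuous.continuousOn ⟨h0, h1⟩
  refine ⟨r, hr0, hr1, hr, fun z hz hzr => ?_⟩
  have hmono := strictMonoOn_eval hp k.succ_ne_zero hk'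
  by_cases hzreal : z = ‖z‖
  · refine absurd ?_ hzr
    have : p.eval ‖z‖ = p.eval r := by
      rw [hzreal, ← Complex.coe_algebraMap, aeval_algebraMap_apply_eq_algebraMap_eval,
        Complex.coe_algebraMap, Complex.ofReal_inj] at hz
      rw [hz, hr]
    rw [hzreal, hmono.injOn (norm_nonneg z) hr0.le this]
  · have hc : 0 ≤ c := (p.coeff_zero_eq_eval_zero ▸ hp 0).trans h0.le
    refine (hmono.lt_iff_lt hr0.le (norm_nonneg z)).mp ?_
    calc p.eval r = ‖aeval z p‖ := by rw [hz, hr, Complex.norm_real, Real.norm_of_nonneg hc]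
      _ < p.eval ‖z‖ := norm_aeval_lt_eval_norm hp hk hk' hzreal

theorem aeval_inv_reverse_eq_zero_iff {R K : Type*} [CommRing R] [Field K] [Algebra R K]
    (p : R[X]) {x : K} (hx : x ≠ 0) : aeval x⁻¹ p.reverse = 0 ↔ aeval x p = 0 := by
  let _ : Invertible x := invertibleOfNonzero hx
  simpa [aeval_def, invOf_eq_inv] using eval₂_reverse_eq_zero_iff (algebraMap R K) x p

end Polynomial

theorem isPerronNumber_one_div_of_root {p : ℤ[X]} (h0 : p.coeff 0 = -1) {r : ℝ} (hr0 : 0 < r)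
    (hr1 : r < 1) (hr : aeval r p = 0) (hmin : ∀ z : ℂ, aeval z p = 0 → z ≠ r → r < ‖z‖) :
    IsPerronNumber (1 / r) := by
  have hp : p ≠ 0 := fun h => by simp [h] at h0
  have hmonic : (-p.reverse).Monic := by
    rw [Monic, leadingCoeff_neg, reverse_leadingCoeff, trailingCoeff_eq_coeff_zero (by simp [h0]),
      h0, neg_neg]
  have hroot : aeval (1 / r) p.reverse = 0 := by
    rwa [one_div, aeval_inv_reverse_eq_zero_iff p hr0.ne']
  refine ⟨one_lt_one_div hr0 hr1, ⟨_, hmonic, by rw [← aeval_def, map_neg, hroot, neg_zero]⟩,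
    fun z hz hzr => ?_⟩
  have hzrev : aeval z p.reverse = 0 := by
    rw [← aeval_map_algebraMap ℚ] at hroot ⊢
    exact aeval_eq_zero_of_dvd_aeval_eq_zero (minpoly.dvd ℚ _ hroot) hz
  have hz0 : z ≠ 0 := by
    rintro rfl
    rw [← coeff_zero_eq_aeval_zero', coeff_zero_reverse] at hzrev
    simp [hp] at hzrev
  have hzinv : aeval z⁻¹ p = 0 := by
    rwa [← aeval_inv_reverse_eq_zero_iff p (inv_ne_zero hz0), inv_inv]
  have hzinv_ne : z⁻¹ ≠ r := fun h => hzr (by rw [one_div, Complex.ofReal_inv, ← h, inv_inv])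
  have hlt := hmin _ hzinv hzinv_ne
  rw [norm_inv] at hlt
  rwa [lt_one_div (norm_pos_iff.mpr hz0) hr0, one_div]

theorem exists_root_isPerronNumber_one_div {p : ℤ[X]} (h0 : p.coeff 0 = -1)
    (hp : ∀ n, n ≠ 0 → 0 ≤ p.coeff n) {k : ℕ} (hk : 0 < p.coeff k) (hk' : 0 < p.coeff (k + 1)) :
    ∃ r : ℝ, 0 < r ∧ r < 1 ∧ aeval r p = 0 ∧
      (∀ z : ℂ, aeval z p = 0 → z ≠ r → r < ‖z‖) ∧ IsPerronNumber (1 / r) := by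
  set q : ℝ[X] := p.map (algebraMap ℤ ℝ) + 1
  have hq0 : q.coeff 0 = 0 := by simp [q, h0]
  have hqn : ∀ {n}, n ≠ 0 → q.coeff n = p.coeff n := fun hn => by simp [q, coeff_one, hn]
  have hq : ∀ n, 0 ≤ q.coeff n := fun n => by
    rcases eq_or_ne n 0 with rfl | hn
    · exact hq0.ge
    · rw [hqn hn]; exact_mod_cast hp n hn
  have hk0 : k ≠ 0 := by rintro rfl; simp [h0] at hk
  have hqk : (1 : ℝ) ≤ q.coeff k := hqn hk0 ▸ by exact_mod_cast hk
  have hqk' : (1 : ℝ) ≤ q.coeff (k + 1) := hqn k.succ_ne_zero ▸ by exact_mod_cast hk'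
  have hq1 : 1 < q.eval 1 := by
    linarith [coeff_add_coeff_le_eval_one hq (Nat.succ_ne_self k).symm]
  obtain ⟨r, hr0, hr1, hr, hmin⟩ := exists_eval_eq_lt_norm_of_aeval_eq hq (k := k)
    (by linarith) (by linarith) (hq0 ▸ one_pos) hq1
  have haeval : ∀ {A} [CommRing A] [Algebra ℝ A] (x : A), aeval x q = aeval x p + 1 := by
    intro A _ _ x
    rw [map_add, aeval_map_algebraMap, map_one]
  have hr' : aeval r p = 0 := by
    have := haeval r
    rw [coe_aeval_eq_eval, hr] at this
    linarith
  have hmin' : ∀ z : ℂ, aeval z p = 0 → z ≠ r → r < ‖z‖ := fun z hz hzr =>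
    hmin z (by rw [haeval, hz, zero_add, Complex.ofReal_one]) hzr
  exact ⟨r, hr0, hr1, hr', hmin', isPerronNumber_one_div_of_root h0 hr0 hr1 hr' hmin'⟩

/-- `H₂₃₆` over `ℤ`: the half-integral coefficients are rewritten through the edge counts
`2 e₃ = 3 v₃₃₃ + 2 v₂₃₃ + v₂₂₃ + v₂₃₆` and `2 e₆ = v₂₂₆ + v₂₃₆`. -/
noncomputable def intH236 (f v2222 v226 v233 v236 v333 e3 e6 : ℕ) : ℤ[X] :=
  C ((v2222 : ℤ) + v236 + v333 - 1) * X ^ 9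
    + C ((v2222 : ℤ) + 2 * v236 + 2 * v333 + f - 5) * X ^ 8
    + C (2 * (v2222 : ℤ) + e3 + e6 + 2 * v236 + v333 + f - 7) * X ^ 7
    + C (2 * (v2222 : ℤ) + e6 + v233 + 3 * v236 + 3 * v333 + 2 * f - 11) * X ^ 6
    + C (2 * (v2222 : ℤ) + e3 + v226 + 3 * v236 + 2 * v333 + 2 * f - 12) * X ^ 5
    + C (2 * (v2222 : ℤ) + e3 + v226 + 2 * v236 + v333 + 2 * f - 12) * X ^ 4
    + C ((v2222 : ℤ) + e6 + v233 + v236 + 2 * v333 + 2 * f - 11) * X ^ 3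
    + C ((v2222 : ℤ) + e3 + e6 + f - 7) * X ^ 2
    + C ((f : ℤ) - 5) * X - 1

theorem coeff_intH236_zero (f v2222 v226 v233 v236 v333 e3 e6 : ℕ) :
    (intH236 f v2222 v226 v233 v236 v333 e3 e6).coeff 0 = -1 := by
  simp [intH236]

theorem coeff_intH236_nonneg {f v2222 v223 v226 v233 v236 v333 e3 e6 : ℕ} (hf : 5 ≤ f)
    (hcusp : 1 ≤ v2222 + v236 + v333) (he3 : 2 * e3 = 3 * v333 + 2 * v233 + v223 + v236)
    (he6' : 1 ≤ e6) (n : ℕ) (hn : n ≠ 0) :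
    0 ≤ (intH236 f v2222 v226 v233 v236 v333 e3 e6).coeff n := by
  rcases le_or_gt n 9 with hn9 | hn9
  · interval_cases n <;>
      simp only [intH236, coeff_add, coeff_sub, coeff_C_mul_X_pow, coeff_C_mul_X, coeff_one] <;>
      norm_num <;> omega
  · rw [coeff_eq_zero_of_natDegree_lt (by unfold intH236; compute_degree!)]

theorem coeff_intH236_seven_eight_pos {f v2222 v223 v226 v233 v236 v333 e3 e6 : ℕ}
    (hf : 5 ≤ f) (hcusp : 1 ≤ v2222 + v236 + v333)
    (he3 : 2 * e3 = 3 * v333 + 2 * v233 + v223 + v236) (he6' : 1 ≤ e6) :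
    0 < (intH236 f v2222 v226 v233 v236 v333 e3 e6).coeff 7 ∧
      0 < (intH236 f v2222 v226 v233 v236 v333 e3 e6).coeff 8 := by
  constructor <;>
    simp only [intH236, coeff_add, coeff_sub, coeff_C_mul_X_pow, coeff_C_mul_X, coeff_one] <;>
    norm_num <;> omega

/-- the denominator polynomial `H₂₃₆` for non-compact hyperbolic Coxeter polyhedra
with dihedral angles `π/2`, `π/3`, `π/6` and at least one `π/6`-edge: its coefficients are
integers, nonnegative in degrees `1`–`9`, positive in degrees `7` and `8`, and it has a root
`r0 ∈ (0,1)` smaller in absolute value than all other complex roots, with `1/r0` a Perron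
number. -/
theorem H236_growth_rate_isPerronNumber
    (f v2222 v223 v226 v233 v236 v333 e3 e6 : ℕ)
    (hf : 5 ≤ f)
    (hcusp : 1 ≤ v2222 + v236 + v333)
    (he3 : 2 * e3 = 3 * v333 + 2 * v233 + v223 + v236)
    (he6 : 2 * e6 = v226 + v236)
    (he6' : 1 ≤ e6)
    (H : Polynomial ℚ)
    (hH : H = C ((v2222 : ℚ) + v236 + v333 - 1) * X ^ 9
        + C ((v2222 : ℚ) + 2 * v236 + 2 * v333 + f - 5) * X ^ 8
        + C (2 * (v2222 : ℚ) + (1/2) * v223 + (1/2) * v226 + v233 + 3 * v236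
              + (5/2) * v333 + f - 7) * X ^ 7
        + C (2 * (v2222 : ℚ) + (1/2) * v226 + v233 + (7/2) * v236 + 3 * v333
              + 2 * f - 11) * X ^ 6
        + C (2 * (v2222 : ℚ) + (1/2) * v223 + v226 + v233 + (7/2) * v236
              + (7/2) * v333 + 2 * f - 12) * X ^ 5
        + C (2 * (v2222 : ℚ) + (1/2) * v223 + v226 + v233 + (5/2) * v236
              + (5/2) * v333 + 2 * f - 12) * X ^ 4
        + C ((v2222 : ℚ) + (1/2) * v226 + v233 + (3/2) * v236 + 2 * v333
              + 2 * f - 11) * X ^ 3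
        + C ((v2222 : ℚ) + (1/2) * v223 + (1/2) * v226 + v233 + v236
              + (3/2) * v333 + f - 7) * X ^ 2
        + C ((f : ℚ) - 5) * X - 1) :
    (∀ k : ℕ, ∃ m : ℤ, H.coeff k = m) ∧
    (∀ k : ℕ, 1 ≤ k → 0 ≤ H.coeff k) ∧
    0 < H.coeff 7 ∧ 0 < H.coeff 8 ∧
    ∃ r0 : ℝ, 0 < r0 ∧ r0 < 1 ∧ aeval r0 H = 0 ∧
      (∀ z : ℂ, aeval z H = 0 → z ≠ (r0 : ℂ) → (r0 : ℝ) < ‖z‖) ∧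
      IsPerronNumber (1 / r0) := by
  have hHp : H = (intH236 f v2222 v226 v233 v236 v333 e3 e6).map (algebraMap ℤ ℚ) := by
    have hq3 : (v223 : ℚ) = 2 * e3 - 3 * v333 - 2 * v233 - v236 := by
      rw [eq_sub_iff_add_eq, eq_sub_iff_add_eq, eq_sub_iff_add_eq]; exact_mod_cast by omega
    have hq6 : (v226 : ℚ) = 2 * e6 - v236 := by
      rw [eq_sub_iff_add_eq]; exact_mod_cast by omega
    simp only [hH, intH236, Polynomial.map_add, Polynomial.map_sub, Polynomial.map_mul,
      Polynomial.map_pow, Polynomial.map_C, Polynomial.map_X, Polynomial.map_one,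
      algebraMap_int_eq, Int.coe_castRingHom]
    push_cast
    rw [hq3, hq6]
    ring_nf
  have hcoeff (n : ℕ) : H.coeff n = (intH236 f v2222 v226 v233 v236 v333 e3 e6).coeff n := by
    rw [hHp, coeff_map, algebraMap_int_eq, Int.coe_castRingHom]
  have hnonneg := coeff_intH236_nonneg (v226 := v226) hf hcusp he3 he6'
  obtain ⟨h7, h8⟩ := coeff_intH236_seven_eight_pos (v226 := v226) hf hcusp he3 he6'
  obtain ⟨r, hr0, hr1, hr, hmin, hperron⟩ :=
    exists_root_isPerronNumber_one_div (coeff_intH236_zero ..) hnonneg h7 h8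
  refine ⟨fun n => ⟨_, hcoeff n⟩, fun n hn => ?_, ?_, ?_, r, hr0, hr1, ?_, ?_, hperron⟩
  · rw [hcoeff]; exact_mod_cast hnonneg n (by omega)
  · rw [hcoeff]; exact_mod_cast h7
  · rw [hcoeff]; exact_mod_cast h8
  · rwa [hHp, aeval_map_algebraMap]
  · simpa only [hHp, aeval_map_algebraMap] using hmin
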